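/- Let SL₂(ℂ) act on ℙ³, the projectivization of the space of 2×2 complex matrices, by left multiplication, with L = O(1). The unstable locus is the quadric surface of singular matrices, and the semistable locus is a single orbit isomorphic to PSL₂(ℂ). For h > 0, the SL₂-invariant part of H⁰(PSL₂, O(h−4)) (where O(1) carries the nontrivial ℤ/2-action of the stabilizer) is ℂ if h is even and h ≥ 4 or h is even with h−4 ≥ 0, and 0 if h is odd; in particular the invariants of H⁰(PSL₂,O(h−4)) vanish for odd h and equal ℂ for even h ≥ 4. -/

import Mathlib

/-!
STATEMENT 3 (Teleman, counterexample (4.3)).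
`SL₂(ℂ)` acts on `ℙ³ = ℙ(Mat₂(ℂ))` by left multiplication, with `L = O(1)`.
Sections of `O(n)` over the open orbit `PSL₂` are modeled by regular functions
`f` on invertible matrices of the form `polynomial / det-power` (`Reg`),
which are homogeneous of degree `n` under scalars (`Homog n`, with `n : ℤ`
since `n` may be negative on the orbit) and `SL₂`-invariant (`LInv`).
Conclusions:
* the semistable locus is `{det ≠ 0}` (the unstable locus is the quadric of
  singular matrices);
* `{det ≠ 0}` is a single orbit of `SL₂ × scalars`, i.e. isomorphic to `PSL₂`;
* for `h > 0`: the `SL₂`-invariants in `H⁰(PSL₂, O(h−4))` vanish if `h` is odd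
  and form exactly one line `ℂ · det^((h−4)/2)` if `h` is even.
-/

open MvPolynomial

/-- `f` is a regular function on the orbit `{det ≠ 0}`:
a polynomial divided by a power of `det`. -/
def Reg3 (f : Matrix (Fin 2) (Fin 2) ℂ → ℂ) : Prop :=
  ∃ (p : MvPolynomial (Fin 2 × Fin 2) ℂ) (k : ℕ),
    ∀ A : Matrix (Fin 2) (Fin 2) ℂ, A.det ≠ 0 →
      f A * A.det ^ k = MvPolynomial.eval (fun ij => A ij.1 ij.2) p

/-- `SL₂`-invariance under left multiplication. -/
def LInv3 (f : Matrix (Fin 2) (Fin 2) ℂ → ℂ) : Prop :=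
  ∀ (g : Matrix.SpecialLinearGroup (Fin 2) ℂ) (A : Matrix (Fin 2) (Fin 2) ℂ),
    f ((g : Matrix (Fin 2) (Fin 2) ℂ) * A) = f A

/-- homogeneity of degree `n ∈ ℤ` under the scalar action. -/
def Homog3 (n : ℤ) (f : Matrix (Fin 2) (Fin 2) ℂ → ℂ) : Prop :=
  ∀ t : ℂ, t ≠ 0 → ∀ A, f (t • A) = t ^ n * f A


noncomputable def pdet3 : MvPolynomial (Fin 2 × Fin 2) ℂ :=
  X (0,0) * X (1,1) - X (0,1) * X (1,0)

lemma eval_pdet3 (A : Matrix (Fin 2) (Fin 2) ℂ) :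
    MvPolynomial.eval (fun ij => A ij.1 ij.2) pdet3 = A.det := by
  simp [pdet3, Matrix.det_fin_two]

lemma det_smul3 (t : ℂ) (A : Matrix (Fin 2) (Fin 2) ℂ) : (t • A).det = t ^ 2 * A.det := by
  simp [Matrix.det_smul]

/-- if `det A = 0` there is `g ∈ SL₂` with `g * A = 2 • A`. -/
lemma exists_double (A : Matrix (Fin 2) (Fin 2) ℂ) (hA : A.det = 0) :
    ∃ g : Matrix.SpecialLinearGroup (Fin 2) ℂ,
      (g : Matrix (Fin 2) (Fin 2) ℂ) * A = (2:ℂ) • A := by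
  rw [Matrix.det_fin_two] at hA
  by_cases h0 : A 0 0 = 0 ∧ A 0 1 = 0
  · refine ⟨⟨!![(1:ℂ)/2, 0; 0, 2], by simp [Matrix.det_fin_two_of]⟩, ?_⟩
    ext i j
    fin_cases i <;> fin_cases j <;>
      simp [Matrix.mul_apply, Fin.sum_univ_two, h0.1, h0.2]
  · -- first row nonzero; let lam be the ratio row1 = lam • row0
    obtain ⟨lam, h1, h2⟩ : ∃ lam : ℂ, A 1 0 = lam * A 0 0 ∧ A 1 1 = lam * A 0 1 := by
      by_cases ha : A 0 0 = 0
      · have hb : A 0 1 ≠ 0 := fun hb => h0 ⟨ha, hb⟩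
        refine ⟨A 1 1 / A 0 1, ?_, by field_simp⟩
        have hz : A 0 1 * A 1 0 = 0 := by linear_combination -hA + A 1 1 * ha
        have h10 : A 1 0 = 0 := (mul_eq_zero.mp hz).resolve_left hb
        rw [ha, h10]; ring
      · refine ⟨A 1 0 / A 0 0, by field_simp, ?_⟩
        field_simp
        linear_combination hA
    refine ⟨⟨!![(2:ℂ), 0; 3 * lam / 2, 1/2], by norm_num [Matrix.det_fin_two_of]⟩, ?_⟩
    ext i j
    fin_cases i <;> fin_cases j <;>
      simp [Matrix.mul_apply, Fin.sum_univ_two]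
    · linear_combination (-3/2 : ℂ) * h1
    · linear_combination (-3/2 : ℂ) * h2

lemma two_zpow_ne_one {n : ℤ} (hn : 0 < n) : (2:ℂ) ^ n ≠ 1 := by
  intro he
  lift n to ℕ using hn.le with k
  rw [zpow_natCast] at he
  have : ((2^k : ℕ) : ℂ) = ((1:ℕ) : ℂ) := by push_cast; simpa using he
  have hk : (2:ℕ)^k = 1 := Nat.cast_injective this
  have hk0 : 0 < k := by exact_mod_cast hn
  have h2 : 1 < 2 ^ k := Nat.one_lt_two_pow_iff.mpr (by omega)
  omega

theorem stmt3 (h : ℤ) (hh : 0 < h) :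
    (∀ A : Matrix (Fin 2) (Fin 2) ℂ, A ≠ 0 →
      ((∃ n : ℤ, 0 < n ∧ ∃ f, Reg3 f ∧ LInv3 f ∧ Homog3 n f ∧ f A ≠ 0) ↔
        A.det ≠ 0)) ∧
    (∀ A B : Matrix (Fin 2) (Fin 2) ℂ, A.det ≠ 0 → B.det ≠ 0 →
      ∃ (g : Matrix.SpecialLinearGroup (Fin 2) ℂ) (t : ℂ), t ≠ 0 ∧
        B = t • ((g : Matrix (Fin 2) (Fin 2) ℂ) * A)) ∧
    (Odd h → ∀ f, Reg3 f → LInv3 f → Homog3 (h - 4) f →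
      ∀ A, A.det ≠ 0 → f A = 0) ∧
    (Even h → ∃ f, Reg3 f ∧ LInv3 f ∧ Homog3 (h - 4) f ∧
      (∃ A, A.det ≠ 0 ∧ f A ≠ 0) ∧
      ∀ f', Reg3 f' → LInv3 f' → Homog3 (h - 4) f' →
        ∃ c : ℂ, ∀ A, A.det ≠ 0 → f' A = c * f A) := by
  refine ⟨?_, ?_, ?_, ?_⟩
  · -- semistable locus
    intro A hA0
    constructor
    · rintro ⟨n, hn, f, -, hLI, hHom, hfA⟩
      intro hdet
      obtain ⟨g, hg⟩ := exists_double A hdet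
      have hli := hLI g A
      rw [hg] at hli
      have h1 : (2:ℂ)^n * f A = f A := (hHom 2 two_ne_zero A).symm.trans hli
      have : ((2:ℂ)^n - 1) * f A = 0 := by linear_combination h1
      rcases mul_eq_zero.mp this with h2 | h2
      · exact two_zpow_ne_one hn (by linear_combination h2)
      · exact hfA h2
    · intro hdet
      refine ⟨2, two_pos, fun B => B.det, ⟨pdet3, 0, fun B _ => by
        simp [eval_pdet3]⟩, fun g B => by
        simp [Matrix.det_mul], fun t ht B => by
        show (t • B).det = t ^ (2:ℤ) * B.det
        rw [det_smul3]; norm_cast, hdet⟩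
  · -- single orbit
    intro A B hA hB
    obtain ⟨t, ht2⟩ := IsAlgClosed.exists_pow_nat_eq (B.det / A.det) two_pos
    have ht : t ≠ 0 := by
      intro h0
      apply div_ne_zero hB hA
      rw [← ht2, h0]; ring
    have hdet : (t⁻¹ • (B * A⁻¹)).det = 1 := by
      rw [det_smul3, Matrix.det_mul, Matrix.det_nonsing_inv,
        Ring.inverse_eq_inv', inv_pow, ht2]
      field_simp
    refine ⟨⟨t⁻¹ • (B * A⁻¹), hdet⟩, t, ht, ?_⟩
    show B = t • ((t⁻¹ • (B * A⁻¹)) * A)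
    rw [Matrix.smul_mul, smul_smul, mul_inv_cancel₀ ht, one_smul,
      Matrix.mul_assoc, Matrix.nonsing_inv_mul A (isUnit_iff_ne_zero.mpr hA), Matrix.mul_one]
  · -- odd vanishing
    intro hodd f _ hLI hHom A _
    have hgA : ((-1 : Matrix.SpecialLinearGroup (Fin 2) ℂ) :
        Matrix (Fin 2) (Fin 2) ℂ) * A = (-1 : ℂ) • A := by
      simp
    have h1 : f A = f ((-1:ℂ) • A) := by
      rw [← hgA, hLI]
    have h2 : f ((-1:ℂ) • A) = (-1:ℂ)^(h-4) * f A :=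
      hHom (-1) (by norm_num) A
    have hodd' : Odd (h - 4) := by
      rcases hodd with ⟨k, hk⟩; exact ⟨k - 2, by omega⟩
    rw [hodd'.neg_one_zpow] at h2
    have h3 : f A = -1 * f A := h1.trans h2
    have h4 : (2:ℂ) * f A = 0 := by linear_combination h3
    exact (mul_eq_zero.mp h4).resolve_left two_ne_zero
  · -- even: one line
    intro heven
    obtain ⟨m, hm⟩ : ∃ m : ℤ, h - 4 = 2 * m := by
      rcases heven with ⟨k, hk⟩; exact ⟨k - 2, by omega⟩
    refine ⟨fun A => A.det ^ m, ?_, ?_, ?_, ?_, ?_⟩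
    · -- Reg3
      rcases le_or_gt 0 m with hm0 | hm0
      · refine ⟨pdet3 ^ m.toNat, 0, fun A hA => ?_⟩
        rw [map_pow, eval_pdet3, pow_zero, mul_one, ← zpow_natCast,
          Int.toNat_of_nonneg hm0]
      · refine ⟨1, (-m).toNat, fun A hA => ?_⟩
        rw [map_one, ← zpow_natCast, Int.toNat_of_nonneg (by omega : (0:ℤ) ≤ -m),
          ← zpow_add₀ hA]
        simp
    · intro g A; simp [Matrix.det_mul]
    · intro t ht A
      show ((t • A).det) ^ m = t ^ (h - 4) * A.det ^ m
      have h2 : t ^ (2:ℕ) = t ^ (2:ℤ) := by norm_cast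
      rw [det_smul3, mul_zpow, hm, h2, ← zpow_mul]
    · exact ⟨1, by simp, by simp⟩
    · intro f' _ hLI hHom
      refine ⟨f' 1, fun A hA => ?_⟩
      obtain ⟨t, ht2⟩ := IsAlgClosed.exists_pow_nat_eq A.det two_pos
      have ht : t ≠ 0 := by intro h0; rw [h0] at ht2; simp at ht2; exact hA ht2.symm
      have hdet : (t⁻¹ • A).det = 1 := by
        rw [det_smul3, ← ht2]; field_simp
      have hAeq : A = t • ((t⁻¹ • A) * 1) := by
        rw [Matrix.mul_one, smul_smul, mul_inv_cancel₀ ht, one_smul]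
      calc f' A = f' (t • (((⟨t⁻¹ • A, hdet⟩ : Matrix.SpecialLinearGroup (Fin 2) ℂ) :
              Matrix (Fin 2) (Fin 2) ℂ) * 1)) := by rw [← hAeq]
        _ = t ^ (h-4) * f' ((((⟨t⁻¹ • A, hdet⟩ : Matrix.SpecialLinearGroup (Fin 2) ℂ)) :
              Matrix (Fin 2) (Fin 2) ℂ) * 1) := hHom t ht _
        _ = t ^ (h-4) * f' 1 := congrArg (fun x => t ^ (h-4) * x) (hLI ⟨t⁻¹ • A, hdet⟩ 1)
        _ = f' 1 * A.det ^ m := by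
              have h2 : t ^ (2:ℤ) = A.det := by rw [← ht2]; norm_cast
              rw [hm, zpow_mul, h2, mul_comm]
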